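/- Let A₁, A₂ be closed subsets of K^n. Then there exists a set U₁ ⊆ K^n which is clopen in K^n \ (A₁ ∩ A₂), contains A₁ \ A₂, and is disjoint from A₂ (and symmetrically U₂ = (K^n \ (A₁∩A₂)) \ U₁ is clopen in K^n \ (A₁∩A₂), contains A₂\A₁, and is disjoint from A₁). -/

import Mathlib

/-!
In an ultrametric space the distance to a set `t` is constant on the ball of radius
`infEDist x t` around `x`. Hence `U₁ = {x ∉ A₂ | d(x, A₁) ≤ d(x, A₂)}` and
`{x | d(x, A₂) < d(x, A₁)}` are both open, and for closed `A₁, A₂` they partition the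
complement of `A₁ ∩ A₂`. Here `d = infEDist`, not `infDist`: the distance to `∅` must be `∞`,
not the junk value `0`, for these sets to be open.
-/

open Metric Set

namespace IsUltrametricDist

variable {X : Type*} [PseudoMetricSpace X] [IsUltrametricDist X]

lemma edist_triangle_max (x y z : X) : edist x z ≤ max (edist x y) (edist y z) := by
  simp only [edist_dist, ← ENNReal.ofReal_max]
  exact ENNReal.ofReal_le_ofReal (dist_triangle_max x y z)

lemma infEDist_le_max_edist_infEDist (x y : X) (s : Set X) :
    infEDist x s ≤ max (edist x y) (infEDist y s) := by
  by_contra! hlt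
  obtain ⟨z, hz, hyz⟩ := infEDist_lt_iff.mp ((le_max_right _ _).trans_lt hlt)
  have hxz := (infEDist_le_edist_of_mem hz).trans (edist_triangle_max x y z)
  exact hxz.not_gt (max_lt ((le_max_left _ _).trans_lt hlt) hyz)

lemma infEDist_eq_of_edist_lt {x y : X} {s : Set X} (h : edist x y < infEDist y s) :
    infEDist x s = infEDist y s := by
  refine le_antisymm ((infEDist_le_max_edist_infEDist x y s).trans (max_le h.le le_rfl)) ?_
  have hy := infEDist_le_max_edist_infEDist y x s
  rw [edist_comm] at hy
  exact (le_max_iff.mp hy).resolve_left h.not_ge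

lemma isOpen_setOf_infEDist_lt (s t : Set X) : IsOpen {x | infEDist x s < infEDist x t} := by
  refine EMetric.isOpen_iff.mpr fun x (hx : infEDist x s < infEDist x t) ↦
    ⟨infEDist x t, pos_of_gt hx, fun y hy ↦ ?_⟩
  rw [mem_eball] at hy
  show infEDist y s < infEDist y t
  rw [infEDist_eq_of_edist_lt hy]
  exact (infEDist_le_max_edist_infEDist y x s).trans_lt (max_lt hy hx)

lemma isOpen_setOf_infEDist_le_diff (s : Set X) {t : Set X} (ht : IsClosed t) :
    IsOpen ({x | infEDist x s ≤ infEDist x t} \ t) := by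
  refine EMetric.isOpen_iff.mpr fun x ⟨(hx : infEDist x s ≤ infEDist x t), hxt⟩ ↦
    ⟨infEDist x t, ?_, fun y hy ↦ ?_⟩
  · exact pos_iff_ne_zero.mpr ((mem_iff_infEDist_zero_of_closed ht).not.mp hxt)
  rw [mem_eball] at hy
  have hyt := infEDist_eq_of_edist_lt hy
  refine ⟨?_, fun hy' ↦ ?_⟩
  · show infEDist y s ≤ infEDist y t
    rw [hyt]
    exact (infEDist_le_max_edist_infEDist y x s).trans (max_le hy.le hx)
  · rw [infEDist_zero_of_mem hy'] at hyt
    exact (hyt ▸ hy).not_ge bot_le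

end IsUltrametricDist

lemma isClopen_preimage_val_of_isOpen_diff {X : Type*} [TopologicalSpace X] {S U : Set X}
    (hU : IsOpen U) (hSU : IsOpen (S \ U)) : IsClopen (Subtype.val ⁻¹' U : Set S) := by
  refine ⟨⟨?_⟩, hU.preimage continuous_subtype_val⟩
  convert hSU.preimage (continuous_subtype_val (p := (· ∈ S))) using 1
  ext x
  simp

/-- For closed `A₁, A₂ ⊆ K^n` there is a set `U₁` which is clopen in
`K^n \ (A₁ ∩ A₂)`, contains `A₁ \ A₂` and is disjoint from `A₂`; symmetrically its
complement `U₂` in `K^n \ (A₁ ∩ A₂)` is clopen there, contains `A₂ \ A₁` and is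
disjoint from `A₁`. -/
theorem exists_relatively_clopen_separating {K : Type*} [NormedField K]
    [IsUltrametricDist K] {n : ℕ} (A₁ A₂ : Set (Fin n → K))
    (h₁ : IsClosed A₁) (h₂ : IsClosed A₂) :
    ∃ U₁ : Set (Fin n → K), U₁ ⊆ (A₁ ∩ A₂)ᶜ ∧
      IsClopen {x : ((A₁ ∩ A₂)ᶜ : Set (Fin n → K)) | (x : Fin n → K) ∈ U₁} ∧
      A₁ \ A₂ ⊆ U₁ ∧ Disjoint U₁ A₂ ∧
      IsClopen {x : ((A₁ ∩ A₂)ᶜ : Set (Fin n → K)) | (x : Fin n → K) ∈ (A₁ ∩ A₂)ᶜ \ U₁} ∧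
      A₂ \ A₁ ⊆ (A₁ ∩ A₂)ᶜ \ U₁ ∧ Disjoint ((A₁ ∩ A₂)ᶜ \ U₁) A₁ := by
  set S := (A₁ ∩ A₂)ᶜ
  set U₁ := {x | infEDist x A₁ ≤ infEDist x A₂} \ A₂
  have hcompl : S \ U₁ = {x | infEDist x A₂ < infEDist x A₁} := by
    ext x
    by_cases hx₂ : x ∈ A₂
    · simp [S, U₁, hx₂, infEDist_zero_of_mem hx₂, pos_iff_ne_zero,
        ← mem_iff_infEDist_zero_of_closed h₁]
    · simp [S, U₁, hx₂]
  have hclopen : IsClopen {x : S | (x : Fin n → K) ∈ U₁} :=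
    isClopen_preimage_val_of_isOpen_diff (IsUltrametricDist.isOpen_setOf_infEDist_le_diff A₁ h₂)
      (hcompl ▸ IsUltrametricDist.isOpen_setOf_infEDist_lt A₂ A₁)
  refine ⟨U₁, fun x hx hx' ↦ hx.2 hx'.2, hclopen, ?_, disjoint_sdiff_left, ?_, ?_, ?_⟩
  · rintro x ⟨hx₁, hx₂⟩
    exact ⟨(infEDist_zero_of_mem hx₁).trans_le bot_le, hx₂⟩
  · convert hclopen.compl using 1
    ext x
    simp
  · rintro x ⟨hx₂, hx₁⟩
    rw [hcompl, mem_ofPred_eq, infEDist_zero_of_mem hx₂]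
    exact pos_iff_ne_zero.mpr ((mem_iff_infEDist_zero_of_closed h₁).not.mp hx₁)
  · rw [hcompl]
    exact disjoint_left.mpr fun x hx hx₁ ↦
      (mem_ofPred_eq ▸ hx).not_ge ((infEDist_zero_of_mem hx₁).trans_le bot_le)
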